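/- arXiv:1306.1023 — 2 statements merged into one kernel-verified Lean document; each statement's English description precedes it below -/
import Mathlib

section
/- (QFT Parseval) For f ∈ L²(ℝ²; ℍ) with suitable integrability, ‖f‖ = (1/(2π))·‖f̂‖, where ‖f‖² = ∫_{ℝ²} |f(x,y)|² dx dy and f̂ is the two-sided quaternion Fourier transform. -/
open Quaternion MeasureTheory Real

noncomputable def qi : ℍ[ℝ] := ⟨0,1,0,0⟩
noncomputable def qj : ℍ[ℝ] := ⟨0,0,1,0⟩
noncomputable def qk : ℍ[ℝ] := ⟨0,0,0,1⟩
/-- exp(θ·v) = cos θ + v sin θ for a quaternion unit v with v² = -1. -/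
noncomputable def qexp (v : ℍ[ℝ]) (θ : ℝ) : ℍ[ℝ] := (Real.cos θ : ℍ[ℝ]) + Real.sin θ • v

/-- The two-sided quaternion Fourier transform. -/
noncomputable def QFT (f : ℝ × ℝ → ℍ[ℝ]) (u v : ℝ) : ℍ[ℝ] :=
  ∫ p : ℝ × ℝ, qexp qi (-(p.1 * u)) * f p * qexp qj (-(p.2 * v))

/-!
Write `‖f p‖² = ⟪f p, f p⟫` and insert the inversion formula in the second slot. For the real
inner product on `ℍ`, left and right multiplication by a unit exponential `qexp v θ` are adjoint to
multiplication by `qexp v (-θ)`, so the integrand `⟪f p, qexp qi (w₁ p₁) * f̂ w * qexp qj (w₂ p₂)⟫`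
equals `⟪K p w, f̂ w⟫`, where `K p w` is the integrand of the transform itself. Since
`|⟪K p w, f̂ w⟫| ≤ |f p| |f̂ w|`, Fubini lets us integrate over `p` first, which gives
`⟪f̂ w, f̂ w⟫`.
-/

section Quaternion

lemma Quaternion.re_mul_comm (a b : ℍ[ℝ]) : (a * b).re = (b * a).re := by
  simp only [Quaternion.re_mul]; ring

lemma inner_mul_mul_eq_inner_star_mul_mul_star (a b u v : ℍ[ℝ]) :
    inner ℝ a (u * b * v) = inner ℝ (star u * a * star v) b := by
  simp only [Quaternion.inner_def, star_mul, ← mul_assoc]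
  rw [Quaternion.re_mul_comm]
  simp only [← mul_assoc]

variable {v : ℍ[ℝ]}

lemma star_qexp (hv : v.re = 0) (θ : ℝ) : star (qexp v θ) = qexp v (-θ) := by
  simp [qexp, Quaternion.star_eq_neg.mpr hv, Real.cos_neg, Real.sin_neg]

lemma norm_qexp (hv : v.re = 0) (hv1 : normSq v = 1) (θ : ℝ) : ‖qexp v θ‖ = 1 := by
  rw [← pow_eq_one_iff_of_nonneg (norm_nonneg _) two_ne_zero, sq, ← normSq_eq_norm_mul_self]
  rw [normSq_def'] at hv1 ⊢
  simp only [qexp, re_add, imI_add, imJ_add, imK_add, re_coe, imI_coe, imJ_coe, imK_coe,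
    re_smul, imI_smul, imJ_smul, imK_smul, hv, smul_eq_mul] at hv1 ⊢
  linear_combination (Real.sin θ) ^ 2 * hv1 + Real.sin_sq_add_cos_sq θ

lemma continuous_qexp (v : ℍ[ℝ]) : Continuous (qexp v) :=
  (Quaternion.continuous_coe.comp Real.continuous_cos).add
    (Real.continuous_sin.smul continuous_const)

lemma qi_re : qi.re = 0 := rfl
lemma qj_re : qj.re = 0 := rfl
lemma normSq_qi : normSq qi = 1 := by rw [normSq_def']; simp [qi]
lemma normSq_qj : normSq qj = 1 := by rw [normSq_def']; simp [qj]

lemma norm_qexp_qi (θ : ℝ) : ‖qexp qi θ‖ = 1 := norm_qexp qi_re normSq_qi θ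
lemma norm_qexp_qj (θ : ℝ) : ‖qexp qj θ‖ = 1 := norm_qexp qj_re normSq_qj θ

lemma MeasureTheory.Integrable.qexp_qi_mul_mul_qexp_qj {α : Type*} [MeasurableSpace α]
    {μ : Measure α} {g : α → ℍ[ℝ]} (hg : Integrable g μ) {a b : α → ℝ}
    (ha : AEStronglyMeasurable a μ) (hb : AEStronglyMeasurable b μ) :
    Integrable (fun x => qexp qi (a x) * g x * qexp qj (b x)) μ :=
  (hg.bdd_mul ((continuous_qexp qi).comp_aestronglyMeasurable ha)
    (ae_of_all _ fun x => (norm_qexp_qi (a x)).le)).mul_bdd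
    ((continuous_qexp qj).comp_aestronglyMeasurable hb)
    (ae_of_all _ fun x => (norm_qexp_qj (b x)).le)

end Quaternion

theorem integral_norm_sq_eq_of_inversion {X Y E : Type*} [MeasurableSpace X] [MeasurableSpace Y]
    {μ : Measure X} {ν : Measure Y} [SFinite μ] [SFinite ν]
    [NormedAddCommGroup E] [InnerProductSpace ℝ E] [CompleteSpace E]
    {f : X → E} {F : Y → E} {A B : X → Y → E} {c : ℝ}
    (hA : ∀ x, Integrable (A x) ν) (hf : ∀ x, f x = c • ∫ w, A x w ∂ν)
    (hB : ∀ w, Integrable (fun x => B x w) μ) (hF : ∀ w, F w = ∫ x, B x w ∂μ)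
    (hAB : ∀ x w, inner ℝ (f x) (A x w) = inner ℝ (B x w) (F w))
    (hint : Integrable (Function.uncurry fun x w => inner ℝ (B x w) (F w)) (μ.prod ν)) :
    ∫ x, ‖f x‖ ^ 2 ∂μ = c * ∫ w, ‖F w‖ ^ 2 ∂ν := by
  have h_norm_f : ∀ x, ‖f x‖ ^ 2 = c * ∫ w, inner ℝ (B x w) (F w) ∂ν := fun x => by
    rw [← real_inner_self_eq_norm_sq]
    nth_rw 2 [hf x]
    rw [real_inner_smul_right, ← integral_inner (hA x)]
    exact congrArg (c * ·) (integral_congr_ae (ae_of_all _ (hAB x)))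
  have h_norm_F : ∀ w, ∫ x, inner ℝ (B x w) (F w) ∂μ = ‖F w‖ ^ 2 := fun w => by
    simp only [real_inner_comm (F w)]
    rw [integral_inner (hB w), ← hF, real_inner_self_eq_norm_sq]
  simp only [h_norm_f, integral_const_mul, integral_integral_swap hint, h_norm_F]

section QFT

noncomputable def qftKernel (f : ℝ × ℝ → ℍ[ℝ]) (p w : ℝ × ℝ) : ℍ[ℝ] :=
  qexp qi (-(p.1 * w.1)) * f p * qexp qj (-(p.2 * w.2))

variable {f : ℝ × ℝ → ℍ[ℝ]}

lemma QFT_eq_integral_qftKernel (w : ℝ × ℝ) : QFT f w.1 w.2 = ∫ p, qftKernel f p w := rfl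

lemma norm_qftKernel (p w : ℝ × ℝ) : ‖qftKernel f p w‖ = ‖f p‖ := by
  simp [qftKernel, norm_qexp_qi, norm_qexp_qj]

lemma integrable_qftKernel (hf : Integrable f) (w : ℝ × ℝ) :
    Integrable (fun p => qftKernel f p w) :=
  hf.qexp_qi_mul_mul_qexp_qj (by fun_prop) (by fun_prop)

lemma integrable_inner_qftKernel_QFT (hf : Integrable f)
    (hFf : Integrable (fun w : ℝ × ℝ => QFT f w.1 w.2)) :
    Integrable (Function.uncurry fun p w => inner ℝ (qftKernel f p w) (QFT f w.1 w.2))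
      ((volume : Measure (ℝ × ℝ)).prod volume) := by
  have hK : AEStronglyMeasurable (Function.uncurry (qftKernel f))
      ((volume : Measure (ℝ × ℝ)).prod volume) :=
    (((continuous_qexp qi).comp (by fun_prop)).aestronglyMeasurable.mul
      (hf.aestronglyMeasurable.comp_quasiMeasurePreserving Measure.quasiMeasurePreserving_fst)).mul
      ((continuous_qexp qj).comp (by fun_prop)).aestronglyMeasurable
  have hF : AEStronglyMeasurable (fun z : (ℝ × ℝ) × (ℝ × ℝ) => QFT f z.2.1 z.2.2)
      ((volume : Measure (ℝ × ℝ)).prod volume) :=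
    hFf.aestronglyMeasurable.comp_quasiMeasurePreserving Measure.quasiMeasurePreserving_snd
  refine (hf.norm.mul_prod hFf.norm).mono' (hK.inner hF) (ae_of_all _ fun z => ?_)
  calc ‖inner ℝ (qftKernel f z.1 z.2) (QFT f z.2.1 z.2.2)‖
      ≤ ‖qftKernel f z.1 z.2‖ * ‖QFT f z.2.1 z.2.2‖ := norm_inner_le_norm _ _
    _ = ‖f z.1‖ * ‖QFT f z.2.1 z.2.2‖ := by rw [norm_qftKernel]

lemma inner_qexp_mul_QFT_mul_qexp (p w : ℝ × ℝ) :
    inner ℝ (f p) (qexp qi (w.1 * p.1) * QFT f w.1 w.2 * qexp qj (w.2 * p.2)) =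
      inner ℝ (qftKernel f p w) (QFT f w.1 w.2) := by
  rw [inner_mul_mul_eq_inner_star_mul_mul_star, star_qexp qi_re, star_qexp qj_re,
    mul_comm w.1, mul_comm w.2, qftKernel]

end QFT

theorem QFT_Parseval (f : ℝ × ℝ → ℍ[ℝ])
    (hf : Integrable f)
    (hFf : Integrable (fun p : ℝ × ℝ => QFT f p.1 p.2))
    (hinv : ∀ x y : ℝ, f (x, y) =
      ((2 * π) ^ 2)⁻¹ • ∫ w : ℝ × ℝ, qexp qi (w.1 * x) * QFT f w.1 w.2 * qexp qj (w.2 * y)) :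
    Real.sqrt (∫ p : ℝ × ℝ, ‖f p‖ ^ 2) =
      (2 * π)⁻¹ * Real.sqrt (∫ w : ℝ × ℝ, ‖QFT f w.1 w.2‖ ^ 2) := by
  have key : ∫ p : ℝ × ℝ, ‖f p‖ ^ 2 = ((2 * π) ^ 2)⁻¹ * ∫ w : ℝ × ℝ, ‖QFT f w.1 w.2‖ ^ 2 :=
    integral_norm_sq_eq_of_inversion
      (fun _ => hFf.qexp_qi_mul_mul_qexp_qj (by fun_prop) (by fun_prop))
      (fun p => hinv p.1 p.2) (integrable_qftKernel hf) QFT_eq_integral_qftKernel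
      inner_qexp_mul_QFT_mul_qexp (integrable_inner_qftKernel_QFT hf hFf)
  rw [key, Real.sqrt_mul (by positivity), Real.sqrt_inv, Real.sqrt_sq (by positivity)]
end

section
/- (QFT of split parts) For f ∈ L²(ℝ²;ℍ) integrable with split f± = (1/2)(f ± i f j), the QFT of f± is given by the one-exponential formulas: QFT(f±)(u,v) = ∫ f±(x,y)·e^{-j(yv ∓ xu)} dx dy = ∫ e^{-i(xu ∓ yv)}·f±(x,y) dx dy. -/
/-!
Since `i f₊ = f₊ (-j)` and `i f₋ = f₋ j`, the left kernel `e^{-ixu}` passes through `f±` and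
becomes `e^{±jxu}` on the right, where it merges with `e^{-jyv}` (and symmetrically the right
kernel passes to the left). The identities therefore already hold for the integrands, pointwise.
-/

open Quaternion MeasureTheory Real

theorem Quaternion.coe_eq_smul_one {R : Type*} [CommRing R] (r : R) : (r : ℍ[R]) = r • 1 := by
  rw [← Quaternion.algebraMap_def, Algebra.algebraMap_eq_smul_one]

theorem qi_mul_qi : qi * qi = -1 := by
  ext <;> simp only [re_mul, imI_mul, imJ_mul, imK_mul] <;> simp [qi]

theorem qj_mul_qj : qj * qj = -1 := by
  ext <;> simp only [re_mul, imI_mul, imJ_mul, imK_mul] <;> simp [qj]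

theorem neg_qj_mul_neg_qj : -qj * -qj = -1 := by
  rw [neg_mul_neg, qj_mul_qj]

section qexp

variable {v w g : ℍ[ℝ]}

theorem qexp_neg_left (w : ℍ[ℝ]) (θ : ℝ) : qexp (-w) θ = qexp w (-θ) := by
  simp [qexp]

theorem qexp_mul_qexp (hv : v * v = -1) (s t : ℝ) : qexp v s * qexp v t = qexp v (s + t) := by
  simp only [qexp, coe_eq_smul_one, add_mul, mul_add, smul_mul_smul, one_mul, mul_one, hv,
    cos_add, sin_add]
  module

theorem qexp_mul_of_mul_eq (h : v * g = g * w) (θ : ℝ) : qexp v θ * g = g * qexp w θ := by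
  simp only [qexp, add_mul, mul_add, smul_mul_assoc, mul_smul_comm, h, coe_mul_eq_smul,
    mul_coe_eq_smul]

theorem qexp_mul_mul_qexp_eq_mul_qexp (h : v * g = g * w) (hw : w * w = -1) (s t : ℝ) :
    qexp v s * g * qexp w t = g * qexp w (s + t) := by
  rw [qexp_mul_of_mul_eq h, mul_assoc, qexp_mul_qexp hw]

theorem qexp_mul_mul_qexp_eq_qexp_mul (h : v * g = g * w) (hv : v * v = -1) (s t : ℝ) :
    qexp v s * g * qexp w t = qexp v (s + t) * g := by
  rw [mul_assoc, ← qexp_mul_of_mul_eq h, ← mul_assoc, qexp_mul_qexp hv]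

end qexp

section split

noncomputable def splitPlus (g : ℍ[ℝ]) : ℍ[ℝ] := (2:ℝ)⁻¹ • (g + qi * g * qj)

noncomputable def splitMinus (g : ℍ[ℝ]) : ℍ[ℝ] := (2:ℝ)⁻¹ • (g - qi * g * qj)

theorem qi_mul_splitPlus (g : ℍ[ℝ]) : qi * splitPlus g = splitPlus g * -qj := by
  simp only [splitPlus, mul_smul_comm, smul_mul_assoc, mul_add, add_mul, mul_neg, ← mul_assoc,
    qi_mul_qi]
  simp only [mul_assoc _ qj qj, qj_mul_qj, neg_mul, mul_neg, one_mul, mul_one]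
  module

theorem qi_mul_splitMinus (g : ℍ[ℝ]) : qi * splitMinus g = splitMinus g * qj := by
  simp only [splitMinus, mul_smul_comm, smul_mul_assoc, mul_sub, sub_mul, ← mul_assoc, qi_mul_qi]
  simp only [mul_assoc _ qj qj, qj_mul_qj, neg_mul, mul_neg, one_mul, mul_one]
  module

variable (g : ℍ[ℝ]) (a b : ℝ)

theorem qexp_qi_mul_splitPlus_mul_qexp_qj_eq_mul_qexp :
    qexp qi (-a) * splitPlus g * qexp qj (-b) = splitPlus g * qexp qj (-(b - a)) := by
  have h := qexp_mul_mul_qexp_eq_mul_qexp (qi_mul_splitPlus g) neg_qj_mul_neg_qj (-a) b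
  rw [qexp_neg_left, qexp_neg_left] at h
  rw [h, neg_add_eq_sub]

theorem qexp_qi_mul_splitPlus_mul_qexp_qj_eq_qexp_mul :
    qexp qi (-a) * splitPlus g * qexp qj (-b) = qexp qi (-(a - b)) * splitPlus g := by
  have h := qexp_mul_mul_qexp_eq_qexp_mul (qi_mul_splitPlus g) qi_mul_qi (-a) b
  rw [qexp_neg_left] at h
  rw [h, neg_sub, neg_add_eq_sub]

theorem qexp_qi_mul_splitMinus_mul_qexp_qj_eq_mul_qexp :
    qexp qi (-a) * splitMinus g * qexp qj (-b) = splitMinus g * qexp qj (-(b + a)) := by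
  rw [qexp_mul_mul_qexp_eq_mul_qexp (qi_mul_splitMinus g) qj_mul_qj, neg_add, add_comm]

theorem qexp_qi_mul_splitMinus_mul_qexp_qj_eq_qexp_mul :
    qexp qi (-a) * splitMinus g * qexp qj (-b) = qexp qi (-(a + b)) * splitMinus g := by
  rw [qexp_mul_mul_qexp_eq_qexp_mul (qi_mul_splitMinus g) qi_mul_qi, neg_add]

end split

theorem QFT_of_split_parts_general (f : ℝ × ℝ → ℍ[ℝ]) (u v : ℝ) :
    let fp : ℝ × ℝ → ℍ[ℝ] := fun p => (2:ℝ)⁻¹ • (f p + qi * f p * qj)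
    let fm : ℝ × ℝ → ℍ[ℝ] := fun p => (2:ℝ)⁻¹ • (f p - qi * f p * qj)
    QFT fp u v = (∫ p : ℝ × ℝ, fp p * qexp qj (-(p.2 * v - p.1 * u))) ∧
    QFT fp u v = (∫ p : ℝ × ℝ, qexp qi (-(p.1 * u - p.2 * v)) * fp p) ∧
    QFT fm u v = (∫ p : ℝ × ℝ, fm p * qexp qj (-(p.2 * v + p.1 * u))) ∧
    QFT fm u v = (∫ p : ℝ × ℝ, qexp qi (-(p.1 * u + p.2 * v)) * fm p) := by
  refine ⟨?_, ?_, ?_, ?_⟩ <;> refine integral_congr_ae (.of_forall fun p => ?_)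
  · exact qexp_qi_mul_splitPlus_mul_qexp_qj_eq_mul_qexp (f p) (p.1 * u) (p.2 * v)
  · exact qexp_qi_mul_splitPlus_mul_qexp_qj_eq_qexp_mul (f p) (p.1 * u) (p.2 * v)
  · exact qexp_qi_mul_splitMinus_mul_qexp_qj_eq_mul_qexp (f p) (p.1 * u) (p.2 * v)
  · exact qexp_qi_mul_splitMinus_mul_qexp_qj_eq_qexp_mul (f p) (p.1 * u) (p.2 * v)

theorem QFT_of_split_parts (f : ℝ × ℝ → ℍ[ℝ]) (u v : ℝ)
    (hf : Integrable f) :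
    let fp : ℝ × ℝ → ℍ[ℝ] := fun p => (2:ℝ)⁻¹ • (f p + qi * f p * qj)
    let fm : ℝ × ℝ → ℍ[ℝ] := fun p => (2:ℝ)⁻¹ • (f p - qi * f p * qj)
    QFT fp u v = (∫ p : ℝ × ℝ, fp p * qexp qj (-(p.2 * v - p.1 * u))) ∧
    QFT fp u v = (∫ p : ℝ × ℝ, qexp qi (-(p.1 * u - p.2 * v)) * fp p) ∧
    QFT fm u v = (∫ p : ℝ × ℝ, fm p * qexp qj (-(p.2 * v + p.1 * u))) ∧
    QFT fm u v = (∫ p : ℝ × ℝ, qexp qi (-(p.1 * u + p.2 * v)) * fm p) :=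
  QFT_of_split_parts_general f u v
end
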